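/- For every N ≥ 1, every K ∈ ℕ, and every pair of starting positions p₁, p₂ ∈ {0,1}^N, the total variation distance between the K-step distributions of the lazy hypercube walk satisfies TV(μ_K(p₁), μ_K(p₂)) ≤ N · ((N−1)/(N+1))^K. -/

import Mathlib

open scoped ENNReal

/-- Total variation distance between two distributions: `(1/2) Σ_x |μ(x) − ν(x)|`. -/
noncomputable def tvDist {X : Type*} (μ ν : PMF X) : ℝ≥0∞ :=
  (1 / 2) * ∑' x, max (μ x - ν x) (ν x - μ x)

/-- One step of the lazy hypercube walk on `{0,1}^N`: sample `i` uniformly from `{0,…,N}`;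
if `i = 0` stay put, otherwise flip coordinate `i`. -/
noncomputable def hcStep (N : ℕ) (p : Fin N → Bool) : PMF (Fin N → Bool) :=
  (PMF.uniformOfFintype (Fin (N + 1))).bind fun i =>
    PMF.pure fun j => if (j : ℕ) + 1 = (i : ℕ) then !(p j) else p j

/-- Distribution of the position of the lazy hypercube walk after `K` steps from `p`. -/
noncomputable def hcWalk (N : ℕ) (p : Fin N → Bool) : ℕ → PMF (Fin N → Bool)
  | 0 => PMF.pure p
  | (K + 1) => (hcWalk N p K).bind (hcStep N)

/-! Couple the walk from `p` with the walk from `p` with coordinate `j` flipped: pair the lazy move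
of each walk with the `j`-flip of the other, so that these two of the `N + 1` moves make the walks
meet, while each of the other `N - 1` moves commutes with flipping `j`. Convexity of total variation
under mixtures then contracts the distance of such adjacent walks by `(N - 1)/(N + 1)` per step.
Two arbitrary starting points are joined by at most `N` single flips, and the triangle inequality
gives the factor `N`. -/

section TotalVariation

variable {α X : Type*}

lemma ENNReal.tsum_sub_tsum_le (u v : α → ℝ≥0∞) : ∑' a, u a - ∑' a, v a ≤ ∑' a, (u a - v a) :=
  tsub_le_iff_right.2 <| (ENNReal.tsum_le_tsum fun _ => le_tsub_add).trans ENNReal.tsum_add.le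

lemma tvDist_self (μ : PMF X) : tvDist μ μ = 0 := by
  simp [tvDist]

lemma tvDist_le_one (μ ν : PMF X) : tvDist μ ν ≤ 1 := by
  have h : ∑' x, max (μ x - ν x) (ν x - μ x) ≤ 2 := calc
    _ ≤ ∑' x, (μ x + ν x) :=
      ENNReal.tsum_le_tsum fun x => max_le (tsub_le_self.trans le_self_add)
        (tsub_le_self.trans le_add_self)
    _ = 2 := by rw [ENNReal.tsum_add, μ.tsum_coe, ν.tsum_coe, one_add_one_eq_two]
  calc tvDist μ ν ≤ 1 / 2 * 2 := by rw [tvDist]; gcongr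
    _ = 1 := ENNReal.div_mul_cancel two_ne_zero ENNReal.ofNat_ne_top

lemma tvDist_triangle (μ ν ρ : PMF X) : tvDist μ ρ ≤ tvDist μ ν + tvDist ν ρ := by
  rw [tvDist, tvDist, tvDist, ← mul_add, ← ENNReal.tsum_add]
  gcongr with x
  exact max_le
    (tsub_le_tsub_add_tsub.trans (add_le_add (le_max_left _ _) (le_max_left _ _)))
    ((tsub_le_tsub_add_tsub.trans_eq (add_comm _ _)).trans
      (add_le_add (le_max_right _ _) (le_max_right _ _)))

lemma tvDist_bind_le (μ : PMF α) (f g : α → PMF X) :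
    tvDist (μ.bind f) (μ.bind g) ≤ ∑' a, μ a * tvDist (f a) (g a) := by
  have mixture_sub (f g : α → PMF X) (x : X) :
      μ.bind f x - μ.bind g x ≤ ∑' a, μ a * (f a x - g a x) := by
    simp only [PMF.bind_apply, ENNReal.mul_sub fun _ _ => μ.apply_ne_top _]
    exact ENNReal.tsum_sub_tsum_le _ _
  calc tvDist (μ.bind f) (μ.bind g)
      ≤ 1 / 2 * ∑' x, ∑' a, μ a * max (f a x - g a x) (g a x - f a x) := by
        rw [tvDist]
        gcongr with x
        exact max_le ((mixture_sub f g x).trans (by gcongr; exact le_max_left _ _))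
          ((mixture_sub g f x).trans (by gcongr; exact le_max_right _ _))
    _ = ∑' a, μ a * tvDist (f a) (g a) := by
        simp only [tvDist, ENNReal.tsum_comm (α := X), ENNReal.tsum_mul_left, mul_left_comm]

lemma PMF.uniformOfFintype_bind_comp_equiv [Fintype α] [Nonempty α] (σ : α ≃ α)
    (f : α → PMF X) :
    (PMF.uniformOfFintype α).bind (f ∘ σ) = (PMF.uniformOfFintype α).bind f := by
  ext x
  simp only [PMF.bind_apply, PMF.uniformOfFintype_apply, Function.comp_apply]
  exact σ.tsum_eq fun a => _ * f a x

end TotalVariation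

section Hamming

variable {ι X : Type*} [DecidableEq ι]

def flipAt (j : ι) (p : ι → Bool) : ι → Bool :=
  Function.update p j (!p j)

@[simp]
lemma flipAt_flipAt (j : ι) (p : ι → Bool) : flipAt j (flipAt j p) = p := by
  simp [flipAt]

variable [Fintype ι]

lemma hammingDist_flipAt_add_one {p q : ι → Bool} {j : ι} (hj : p j ≠ q j) :
    hammingDist (flipAt j p) q + 1 = hammingDist p q := by
  have hdiff : ({i | flipAt j p i ≠ q i} : Finset ι) = ({i | p i ≠ q i} : Finset ι).erase j := by
    ext i
    simp only [Finset.mem_filter, Finset.mem_univ, true_and, Finset.mem_erase]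
    rcases eq_or_ne i j with rfl | hi
    · simpa [flipAt] using hj
    · simp [flipAt, hi]
  rw [hammingDist, hammingDist, hdiff, Finset.card_erase_add_one (by simpa using hj)]

lemma tvDist_le_hammingDist_mul (μ : (ι → Bool) → PMF X) {c : ℝ≥0∞}
    (hflip : ∀ p j, tvDist (μ p) (μ (flipAt j p)) ≤ c) (p q : ι → Bool) :
    tvDist (μ p) (μ q) ≤ hammingDist p q * c := by
  induction hd : hammingDist p q generalizing p with
  | zero => simp [hammingDist_eq_zero.1 hd, tvDist_self]
  | succ n ih =>
    have hne : p ≠ q := hammingDist_pos.1 (by omega)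
    obtain ⟨j, hj⟩ := Function.ne_iff.1 hne
    have hcloser : hammingDist (flipAt j p) q = n := by
      have := hammingDist_flipAt_add_one hj
      omega
    calc tvDist (μ p) (μ q) ≤ tvDist (μ p) (μ (flipAt j p)) + tvDist (μ (flipAt j p)) (μ q) :=
          tvDist_triangle _ _ _
      _ ≤ c + n * c := add_le_add (hflip p j) (ih _ hcloser)
      _ = (n + 1 : ℕ) * c := by push_cast; ring

end Hamming

section Hypercube

variable {N : ℕ}

def hcMove (N : ℕ) (i : Fin (N + 1)) (p : Fin N → Bool) : Fin N → Bool :=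
  fun j => if (j : ℕ) + 1 = (i : ℕ) then !(p j) else p j

@[simp]
lemma hcMove_zero (p : Fin N → Bool) : hcMove N 0 p = p := by
  ext k
  simp [hcMove]

lemma hcMove_succ (j : Fin N) (p : Fin N → Bool) : hcMove N j.succ p = flipAt j p := by
  ext k
  simp +contextual [hcMove, flipAt, Function.update_apply, Fin.val_inj]

lemma hcMove_flipAt {i : Fin (N + 1)} {j : Fin N} (h : i ≠ j.succ) (p : Fin N → Bool) :
    hcMove N i (flipAt j p) = flipAt j (hcMove N i p) := by
  ext k
  rcases eq_or_ne k j with rfl | hk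
  · have : (k : ℕ) + 1 ≠ i := fun hki => h (Fin.ext (by simp [← hki]))
    simp [hcMove, flipAt, this]
  · simp [hcMove, flipAt, hk]

lemma hcWalk_succ_eq_bind_hcWalk (p : Fin N → Bool) (K : ℕ) :
    hcWalk N p (K + 1) = (hcStep N p).bind fun q => hcWalk N q K := by
  induction K generalizing p with
  | zero => simp [hcWalk]
  | succ K ih => rw [hcWalk, ih, PMF.bind_bind]; rfl

lemma hcWalk_succ_eq_uniform_bind (p : Fin N → Bool) (K : ℕ) :
    hcWalk N p (K + 1) =
      (PMF.uniformOfFintype (Fin (N + 1))).bind fun i => hcWalk N (hcMove N i p) K := by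
  simp only [hcWalk_succ_eq_bind_hcWalk, hcStep, PMF.bind_bind, PMF.pure_bind]
  rfl

theorem hcWalk_tvDist_flipAt_le (j : Fin N) (p : Fin N → Bool) (K : ℕ) :
    tvDist (hcWalk N p K) (hcWalk N (flipAt j p) K)
      ≤ (((N : ℝ≥0∞) - 1) / ((N : ℝ≥0∞) + 1)) ^ K := by
  set r := ((N : ℝ≥0∞) - 1) / ((N : ℝ≥0∞) + 1) with hr
  induction K generalizing p with
  | zero => simpa using tvDist_le_one _ _
  | succ K ih =>
    set σ := Equiv.swap (0 : Fin (N + 1)) j.succ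
    set S : Finset (Fin (N + 1)) := {0, j.succ}
    set W := fun i => hcWalk N (hcMove N i p) K
    set W' := fun i => hcWalk N (hcMove N (σ i) (flipAt j p)) K
    have hmeet : ∀ i ∈ S, tvDist (W i) (W' i) = 0 := by
      simp [S, W, W', σ, hcMove_succ, tvDist_self]
    have hcommute : ∀ i ∈ Sᶜ, tvDist (W i) (W' i) ≤ r ^ K := by
      intro i hi
      simp only [S, Finset.mem_compl, Finset.mem_insert, Finset.mem_singleton, not_or] at hi
      simp only [W, W', σ, Equiv.swap_apply_of_ne_of_ne hi.1 hi.2, hcMove_flipAt hi.2]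
      exact ih _
    have hcard : Sᶜ.card = N - 1 := by
      rw [Finset.card_compl, Finset.card_pair (Fin.succ_ne_zero j).symm, Fintype.card_fin]
      omega
    calc tvDist (hcWalk N p (K + 1)) (hcWalk N (flipAt j p) (K + 1))
        = tvDist ((PMF.uniformOfFintype _).bind W) ((PMF.uniformOfFintype _).bind W') := by
          rw [hcWalk_succ_eq_uniform_bind, hcWalk_succ_eq_uniform_bind,
            ← PMF.uniformOfFintype_bind_comp_equiv σ fun i => hcWalk N (hcMove N i (flipAt j p)) K]
          rfl
      _ ≤ ∑ i, ((N : ℝ≥0∞) + 1)⁻¹ * tvDist (W i) (W' i) := by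
          refine (tvDist_bind_le _ _ _).trans_eq ?_
          simp [tsum_fintype, PMF.uniformOfFintype_apply]
      _ ≤ ∑ i ∈ Sᶜ, ((N : ℝ≥0∞) + 1)⁻¹ * r ^ K := by
          rw [← Finset.sum_add_sum_compl S,
            Finset.sum_eq_zero fun i hi => by rw [hmeet i hi, mul_zero], zero_add]
          gcongr with i hi
          exact hcommute i hi
      _ = r ^ (K + 1) := by
          rw [Finset.sum_const, hcard, nsmul_eq_mul, ENNReal.natCast_sub, pow_succ, hr,
            ENNReal.div_eq_inv_mul]
          push_cast
          ring

end Hypercube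

theorem hcWalk_tv_le_general (N K : ℕ) (p₁ p₂ : Fin N → Bool) :
    tvDist (hcWalk N p₁ K) (hcWalk N p₂ K)
      ≤ (N : ℝ≥0∞) * (((N : ℝ≥0∞) - 1) / ((N : ℝ≥0∞) + 1)) ^ K := by
  calc tvDist (hcWalk N p₁ K) (hcWalk N p₂ K)
      ≤ hammingDist p₁ p₂ * (((N : ℝ≥0∞) - 1) / ((N : ℝ≥0∞) + 1)) ^ K :=
        tvDist_le_hammingDist_mul (hcWalk N · K) (fun p j => hcWalk_tvDist_flipAt_le j p K) p₁ p₂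
    _ ≤ N * (((N : ℝ≥0∞) - 1) / ((N : ℝ≥0∞) + 1)) ^ K := by
        gcongr
        simpa using hammingDist_le_card_fintype (x := p₁) (y := p₂)

/-- **Rapid mixing of the lazy hypercube walk (upper bound).** For any `N ≥ 1`, `K`, and starting
positions `p₁, p₂`, the TV distance between the `K`-step distributions is at most
`N · ((N−1)/(N+1))^K`. -/
theorem hcWalk_tv_le (N K : ℕ) (hN : 1 ≤ N) (p₁ p₂ : Fin N → Bool) :
    tvDist (hcWalk N p₁ K) (hcWalk N p₂ K)
      ≤ (N : ℝ≥0∞) * (((N : ℝ≥0∞) - 1) / ((N : ℝ≥0∞) + 1)) ^ K :=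
  hcWalk_tv_le_general N K p₁ p₂
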